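/- Let μ be a partition of n+1, and for each injective tableau T of shape μ (bijection from cells of μ to {1,...,n+1}), let (r_{n+1}, c_{n+1}) be the position of entry n+1. Fix distinct scalars ζ_0, ζ_1, ζ_2,... and define the point π(ρ_T) = (ζ_{r_1},...,ζ_{r_{n+1}}) ∈ ℂ^{n+1}, where (r_k, c_k) is the position of entry k. Then the number of distinct points π(ρ_T) over all injective tableaux T with r_{n+1} ≥ i and c_{n+1} ≥ j equals (n!/μ!) Σ_{i' > i, μ_{i'} > j} μ_{i'}. -/

import Mathlib

/-- The cells of the diagram of `μ` (0-based coordinates), inside an `N × N` box. -/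
def diagOf (μ : ℕ → ℕ) (N : ℕ) : Finset (ℕ × ℕ) :=
  (Finset.range N ×ˢ Finset.range N).filter fun p => p.2 < μ p.1

/-!
A point `π(ρ_T)` only remembers the row word of `T`, i.e. the row of each entry. The points
are therefore the row words with `μ_r` letters `r` whose last letter is a row `r ≥ i` with
`μ_r > j`: given such a word, entry `n + 1` can be moved to the end of its row. These words
are counted by counting twice the tableaux whose entry `n + 1` lies in such a row: every word
is the row word of `μ!` of them (permute the entries inside each row), and every admissible
cell holds entry `n + 1` in `n!` of them.
-/

open Finset Function Nat

namespace Equiv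

variable {α β ι : Type*} [Finite α] [Finite β] {fa : α → ι} {fb : β → ι}

theorem exists_comp_eq_of_card_fiber_eq
    (h : ∀ i, Nat.card {a // fa a = i} = Nat.card {b // fb b = i}) :
    ∃ E : α ≃ β, fb ∘ E = fa :=
  ⟨ofFiberEquiv fun i => (Finite.card_eq.mp (h i)).some, funext (ofFiberEquiv_map _)⟩

theorem exists_comp_eq_apply_eq_of_card_fiber_eq
    (h : ∀ i, Nat.card {a // fa a = i} = Nat.card {b // fb b = i})
    (a : α) (b : β) (hab : fb b = fa a) :
    ∃ E : α ≃ β, fb ∘ E = fa ∧ E a = b := by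
  classical
  obtain ⟨E, hE⟩ := exists_comp_eq_of_card_fiber_eq h
  have hswap : ∀ y, fb (swap (E a) b y) = fb y := fun y => by
    rcases eq_or_ne y (E a) with rfl | hya
    · rw [swap_apply_left, hab, ← hE, comp_apply]
    rcases eq_or_ne y b with rfl | hyb
    · rw [swap_apply_right, hab, ← hE, comp_apply]
    · rw [swap_apply_of_ne_of_ne hya hyb]
  refine ⟨E.trans (swap (E a) b), ?_, swap_apply_left _ _⟩
  ext x
  simp only [comp_apply, trans_apply, hswap, ← hE]

theorem card_comp_eq_of_card_fiber_eq [Fintype ι]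
    (h : ∀ i, Nat.card {a // fa a = i} = Nat.card {b // fb b = i}) :
    Nat.card {E : α ≃ β // fb ∘ E = fa} = ∏ i, (Nat.card {a // fa a = i})! := by
  classical
  have := Fintype.ofFinite α
  obtain ⟨E₀, hE₀⟩ := exists_comp_eq_of_card_fiber_eq h
  have hfb : fa ∘ E₀.symm = fb := by rw [← hE₀, comp_assoc, E₀.self_comp_symm, comp_id]
  have e : {E : α ≃ β // fb ∘ E = fa} ≃ {σ : Perm α // fa ∘ σ = fa} :=
    subtypeEquiv ((Equiv.refl α).equivCongr E₀.symm) fun E => by rw [← hfb]; rfl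
  rw [Nat.card_congr e, Nat.card_eq_fintype_card, DomMulAct.stabilizer_card]
  simp only [Nat.card_eq_fintype_card]

theorem card_apply_eq (a : α) (b : β) (h : Nat.card α = Nat.card β) :
    Nat.card {E : α ≃ β // E a = b} = (Nat.card α - 1)! := by
  classical
  have := Fintype.ofFinite α
  have := Fintype.ofFinite β
  have hfib : ∀ p : Prop, Nat.card {x // (x = a) = p} = Nat.card {y // (y = b) = p} := by
    intro p
    by_cases hp : p
    · simp [hp]
    · simp only [Nat.card_eq_fintype_card] at h
      simp [hp, Nat.card_eq_fintype_card, Fintype.card_subtype_compl, h]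
  have hE : ∀ E : α ≃ β, (· = b) ∘ E = (· = a) ↔ E a = b := fun E => by
    refine ⟨fun hE => by simpa using congrFun hE a, ?_⟩
    rintro rfl
    funext x
    simp
  rw [← Nat.card_congr (subtypeEquivRight hE), card_comp_eq_of_card_fiber_eq hfib,
    Fintype.prod_Prop]
  simp [Nat.card_eq_fintype_card, Fintype.card_subtype_compl]

end Equiv

theorem Nat.card_subtype_eq_mul_of_card_fiber_eq {α γ : Type*} [Finite α] [Finite γ]
    (f : α → γ) {p : α → Prop} {q : γ → Prop} (h : ∀ x, p x ↔ q (f x)) {m : ℕ}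
    (hm : ∀ c, q c → Nat.card {x // f x = c} = m) :
    Nat.card {x // p x} = Nat.card {c // q c} * m := by
  have := Fintype.ofFinite {c // q c}
  rw [← Nat.card_congr (Equiv.sigmaSubtypeFiberEquivSubtype f h), Nat.card_sigma,
    sum_congr rfl fun c _ => hm c.1 c.2, sum_const, Finset.card_univ, smul_eq_mul,
    Nat.card_eq_fintype_card]

section Diagram

variable {μ : ℕ → ℕ} {N : ℕ}

theorem mem_diagOf {p : ℕ × ℕ} :
    p ∈ diagOf μ N ↔ (p.1 < N ∧ p.2 < N) ∧ p.2 < μ p.1 := by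
  simp [diagOf]

theorem card_filter_diagOf (hμ : ∀ t < N, μ t ≤ N) (q : ℕ → Prop) [DecidablePred q] :
    #{p ∈ diagOf μ N | q p.1} = ∑ t ∈ range N with q t, μ t := by
  rw [diagOf, filter_filter, card_filter, sum_product, sum_filter]
  refine sum_congr rfl fun t ht => ?_
  rw [← card_filter]
  split_ifs with hq
  · have hle := hμ t (mem_range.mp ht)
    convert card_range (μ t) using 2
    ext c
    simp only [mem_filter, mem_range, hq, and_true]
    omega
  · simp [hq]

def diagOf.row (d : diagOf μ N) : Fin N := ⟨d.1.1, (mem_diagOf.mp d.2).1.1⟩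

theorem card_diagOf_subtype_fst (hμ : ∀ t < N, μ t ≤ N) (q : ℕ → Prop) [DecidablePred q] :
    Nat.card {d : diagOf μ N // q d.1.1} = ∑ t ∈ range N with q t, μ t := by
  rw [← card_filter_diagOf hμ, ← Nat.card_eq_finsetCard]
  exact Nat.card_congr
    ((Equiv.subtypeSubtypeEquivSubtypeInter (· ∈ diagOf μ N) (fun p => q p.1)).trans
      (Equiv.subtypeEquivRight fun p => by rw [mem_filter]))

theorem card_diagOf (hμ : ∀ t < N, μ t ≤ N) :
    Nat.card (diagOf μ N) = ∑ t ∈ range N, μ t := by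
  rw [Nat.card_eq_finsetCard]
  simpa using card_filter_diagOf hμ (fun _ => True)

theorem card_diagOf_row_eq (hμ : ∀ t < N, μ t ≤ N) (r : Fin N) :
    Nat.card {d : diagOf μ N // diagOf.row d = r} = μ r := by
  simp only [diagOf.row, Fin.ext_iff]
  rw [card_diagOf_subtype_fst hμ (· = (r : ℕ)), sum_filter, sum_ite_eq',
    if_pos (mem_range.mpr r.2)]

end Diagram

theorem Finset.exists_bijection_iff_exists_equiv {α β : Type*} {s : Finset β}
    {Q : (α → β) → Prop} :
    (∃ P : α → β, Injective P ∧ (∀ a, P a ∈ s) ∧ (∀ b ∈ s, ∃ a, P a = b) ∧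
      Q P) ↔ ∃ E : α ≃ s, Q fun a => E a := by
  constructor
  · rintro ⟨P, hinj, hmem, hsurj, hQ⟩
    refine ⟨Equiv.ofBijective (fun a => ⟨P a, hmem a⟩) ⟨fun a b h => hinj ?_, ?_⟩, hQ⟩
    · exact congrArg Subtype.val h
    · rintro ⟨b, hb⟩
      obtain ⟨a, rfl⟩ := hsurj b hb
      exact ⟨a, rfl⟩
  · rintro ⟨E, hQ⟩
    exact ⟨_, Subtype.val_injective.comp E.injective, fun a => (E a).2,
      fun b hb => ⟨E.symm ⟨b, hb⟩, by simp⟩, hQ⟩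

section Tableau

variable {n : ℕ} {μ : ℕ → ℕ} {i j : ℕ}

theorem le_of_sum_range_eq (hsum : ∑ t ∈ range (n + 1), μ t = n + 1) :
    ∀ t < n + 1, μ t ≤ n + 1 :=
  fun _ ht => hsum ▸ single_le_sum (fun _ _ => Nat.zero_le _) (mem_range.mpr ht)

-- `g k` is the row of entry `k + 1`; by the last condition entry `n + 1` fits in a column `≥ j`.
def IsRowWord (μ : ℕ → ℕ) (i j : ℕ) (g : Fin (n + 1) → Fin (n + 1)) : Prop :=
  (∀ r, Nat.card {k // g k = r} = μ r) ∧ i ≤ g (Fin.last n) ∧ j < μ (g (Fin.last n))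

theorem isRowWord_row_comp_iff (hsum : ∑ t ∈ range (n + 1), μ t = n + 1)
    (E : Fin (n + 1) ≃ diagOf μ (n + 1)) :
    IsRowWord μ i j (diagOf.row ∘ E) ↔
      i ≤ (E (Fin.last n)).1.1 ∧ j < μ (E (Fin.last n)).1.1 := by
  refine and_iff_right fun r => ?_
  rw [← card_diagOf_row_eq (le_of_sum_range_eq hsum) r]
  exact Nat.card_congr (E.subtypeEquiv fun _ => Iff.rfl)

theorem isRowWord_iff_exists_tableau (hsum : ∑ t ∈ range (n + 1), μ t = n + 1)
    {g : Fin (n + 1) → Fin (n + 1)} :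
    IsRowWord μ i j g ↔ ∃ E : Fin (n + 1) ≃ diagOf μ (n + 1),
      i ≤ (E (Fin.last n)).1.1 ∧ j ≤ (E (Fin.last n)).1.2 ∧ diagOf.row ∘ E = g := by
  have hμ := le_of_sum_range_eq hsum
  constructor
  · rintro ⟨hfib, hi, hj⟩
    set r := g (Fin.last n)
    have hcorner : ((r : ℕ), μ r - 1) ∈ diagOf μ (n + 1) := by
      have := hμ r r.2
      rw [mem_diagOf]
      dsimp only
      omega
    obtain ⟨E, hE, hlast⟩ :=
      Equiv.exists_comp_eq_apply_eq_of_card_fiber_eq (fb := diagOf.row)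
      (fun s => by rw [hfib, card_diagOf_row_eq hμ]) (Fin.last n) ⟨_, hcorner⟩ rfl
    refine ⟨E, ?_, ?_, hE⟩ <;> rw [hlast]
    · exact hi
    · exact Nat.le_sub_one_of_lt hj
  · rintro ⟨E, hi, hj, rfl⟩
    exact (isRowWord_row_comp_iff hsum E).2 ⟨hi, hj.trans_lt (mem_diagOf.mp (E _).2).2⟩

theorem points_eq_image_rowWords {X : Type*} (hsum : ∑ t ∈ range (n + 1), μ t = n + 1)
    (ζ : ℕ → X) :
    {f : Fin (n + 1) → X | ∃ P : Fin (n + 1) → ℕ × ℕ,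
        Function.Injective P ∧ (∀ k, P k ∈ diagOf μ (n + 1)) ∧
        (∀ p ∈ diagOf μ (n + 1), ∃ k, P k = p) ∧
        i ≤ (P (Fin.last n)).1 ∧ j ≤ (P (Fin.last n)).2 ∧
        f = fun k => ζ (P k).1} =
      (fun g k => ζ (g k)) '' {g | IsRowWord μ i j g} := by
  ext f
  simp only [Set.mem_ofPred_eq, Set.mem_image, Finset.exists_bijection_iff_exists_equiv,
    isRowWord_iff_exists_tableau hsum]
  constructor
  · rintro ⟨E, hi, hj, rfl⟩
    exact ⟨_, ⟨E, hi, hj, rfl⟩, rfl⟩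
  · rintro ⟨_, ⟨E, hi, hj, rfl⟩, rfl⟩
    exact ⟨E, hi, hj, rfl⟩

theorem card_rowWords_mul_prod_factorial (hsum : ∑ t ∈ range (n + 1), μ t = n + 1) :
    Nat.card {g : Fin (n + 1) → Fin (n + 1) // IsRowWord μ i j g} *
        ∏ t ∈ range (n + 1), (μ t)! =
      (∑ t ∈ range (n + 1) with i ≤ t ∧ j < μ t, μ t) * n ! := by
  have hμ := le_of_sum_range_eq hsum
  have hcard : Nat.card (Fin (n + 1)) = Nat.card (diagOf μ (n + 1)) := by
    rw [card_diagOf hμ, hsum, Nat.card_fin]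
  calc _ = Nat.card {E : Fin (n + 1) ≃ diagOf μ (n + 1) //
        IsRowWord μ i j (diagOf.row ∘ E)} := by
        refine (Nat.card_subtype_eq_mul_of_card_fiber_eq
          (fun E : Fin (n + 1) ≃ diagOf μ (n + 1) => diagOf.row ∘ E)
          (fun _ => Iff.rfl) fun g hg => ?_).symm
        rw [Equiv.card_comp_eq_of_card_fiber_eq fun r => by rw [hg.1, card_diagOf_row_eq hμ],
          ← Fin.prod_univ_eq_prod_range]
        simp only [hg.1]
    _ = _ := by
        rw [Nat.card_subtype_eq_mul_of_card_fiber_eq (· (Fin.last n))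
          (q := fun d => i ≤ d.1.1 ∧ j < μ d.1.1) (isRowWord_row_comp_iff hsum)
          fun d _ => Equiv.card_apply_eq _ d hcard,
          card_diagOf_subtype_fst hμ (fun t => i ≤ t ∧ j < μ t), Nat.card_fin,
          Nat.add_sub_cancel]

end Tableau

theorem stmt18_general (n : ℕ) (μ : ℕ → ℕ)
    (hsum : ∑ t ∈ Finset.range (n + 1), μ t = n + 1)
    (i j : ℕ)
    (ζ : ℕ → ℂ) (hζ : Function.Injective ζ) :
    (Nat.card {f : Fin (n + 1) → ℂ | ∃ P : Fin (n + 1) → ℕ × ℕ,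
        Function.Injective P ∧ (∀ k, P k ∈ diagOf μ (n + 1)) ∧
        (∀ p ∈ diagOf μ (n + 1), ∃ k, P k = p) ∧
        i ≤ (P (Fin.last n)).1 ∧ j ≤ (P (Fin.last n)).2 ∧
        f = fun k => ζ (P k).1} : ℚ) =
      (n.factorial : ℚ) / ((∏ t ∈ Finset.range (n + 1), (μ t).factorial : ℕ) : ℚ) *
        ∑ t ∈ (Finset.range (n + 1)).filter (fun t => i ≤ t ∧ j < μ t), (μ t : ℚ) := by
  have hinj : Injective fun (g : Fin (n + 1) → Fin (n + 1)) k => ζ (g k) :=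
    fun g g' h => funext fun k => Fin.val_injective (hζ (congrFun h k))
  rw [points_eq_image_rowWords hsum, Nat.card_image_of_injective hinj]
  have hprod : ((∏ t ∈ range (n + 1), (μ t)! : ℕ) : ℚ) ≠ 0 := by positivity
  rw [eq_comm, div_mul_eq_mul_div, div_eq_iff hprod]
  exact_mod_cast ((card_rowWords_mul_prod_factorial (i := i) (j := j) hsum).trans
    (mul_comm _ _)).symm

/-- the number of distinct points `π(ρ_T) = (ζ_{r_1},…,ζ_{r_{n+1}})`,
over the injective tableaux `T` of shape `μ ⊢ n+1` (given by the position map `P` of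
the entries, entry `n+1` corresponding to `Fin.last n`) whose entry `n+1` lies in the
shadow of `(i,j)`, equals `(n!/μ!) Σ_{i' > i, μ_{i'} > j} μ_{i'}`. -/
theorem stmt18 (n : ℕ) (μ : ℕ → ℕ) (hmono : Antitone μ)
    (hvanish : ∀ t, n + 1 ≤ t → μ t = 0)
    (hsum : ∑ t ∈ Finset.range (n + 1), μ t = n + 1)
    (i j : ℕ) (hij : j < μ i)
    (ζ : ℕ → ℂ) (hζ : Function.Injective ζ) :
    (Nat.card {f : Fin (n + 1) → ℂ | ∃ P : Fin (n + 1) → ℕ × ℕ,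
        Function.Injective P ∧ (∀ k, P k ∈ diagOf μ (n + 1)) ∧
        (∀ p ∈ diagOf μ (n + 1), ∃ k, P k = p) ∧
        i ≤ (P (Fin.last n)).1 ∧ j ≤ (P (Fin.last n)).2 ∧
        f = fun k => ζ (P k).1} : ℚ) =
      (n.factorial : ℚ) / ((∏ t ∈ Finset.range (n + 1), (μ t).factorial : ℕ) : ℚ) *
        ∑ t ∈ (Finset.range (n + 1)).filter (fun t => i ≤ t ∧ j < μ t), (μ t : ℚ) :=
  stmt18_general n μ hsum i j ζ hζ
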